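/- For any two policies π and π′, the difference of returns equals the discounted sum of expected advantages of π along trajectories of π′: J(π′) − J(π) = Σ_{t=0}^∞ γ^t E_{x ~ d_t^{π′,μ}} E_{a ~ π′(x)} [A^π(x,a)]. (All series converge absolutely since S and A are finite, r is bounded, and 0 ≤ γ < 1.) -/

import Mathlib

open scoped BigOperators

section MDPDefs

variable {S A : Type*} [Fintype S] [Fintype A]

/-- Expectation of a real-valued function under a PMF on a finite type (a finite sum). -/
noncomputable def pmfExp {X : Type*} [Fintype X] (p : PMF X) (f : X → ℝ) : ℝ :=
  ∑ x, (p x).toReal * f x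

/-- Time-`t` state distribution `d_t^{π,μ}`:
`d_0 = μ` and `d_{t+1}` is obtained by sampling `x ~ d_t`, `a ~ π x`, `s' ~ P x a`. -/
noncomputable def stateDist (P : S → A → PMF S) (π : S → PMF A) (μ : PMF S) : ℕ → PMF S
  | 0 => μ
  | t + 1 => (stateDist P π μ t).bind fun x => (π x).bind fun a => P x a

/-- State value function `V^π(s) = Σ_t γ^t E_{x ~ d_t^{π, δ_s}} E_{a ~ π x}[r x a]`. -/
noncomputable def Vval (P : S → A → PMF S) (r : S → A → ℝ) (γ : ℝ) (π : S → PMF A) (s : S) : ℝ :=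
  ∑' t : ℕ, γ ^ t * pmfExp (stateDist P π (PMF.pure s) t) fun x => pmfExp (π x) fun a => r x a

/-- Return from an initial distribution: `J(π) = E_{s~μ}[V^π(s)]`. -/
noncomputable def Jret (P : S → A → PMF S) (r : S → A → ℝ) (γ : ℝ) (π : S → PMF A) (μ : PMF S) : ℝ :=
  pmfExp μ (Vval P r γ π)

/-- State-action value `Q^π(s,a) = r(s,a) + γ E_{s' ~ P s a}[V^π(s')]`. -/
noncomputable def Qval (P : S → A → PMF S) (r : S → A → ℝ) (γ : ℝ) (π : S → PMF A)
    (s : S) (a : A) : ℝ :=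
  r s a + γ * pmfExp (P s a) (Vval P r γ π)

/-- Advantage `A^π(s,a) = Q^π(s,a) - V^π(s)`. -/
noncomputable def Adv (P : S → A → PMF S) (r : S → A → ℝ) (γ : ℝ) (π : S → PMF A)
    (s : S) (a : A) : ℝ :=
  Qval P r γ π s a - Vval P r γ π s

/-- Discounted state-visitation distribution `ν^{π,μ}(s) = (1-γ) Σ_t γ^t d_t^{π,μ}(s)`. -/
noncomputable def visit (P : S → A → PMF S) (π : S → PMF A) (μ : PMF S) (γ : ℝ) (s : S) : ℝ :=
  (1 - γ) * ∑' t : ℕ, γ ^ t * (stateDist P π μ t s).toReal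

/-- `ℓ¹` distance between two PMFs on a finite type. -/
noncomputable def l1Dist {X : Type*} [Fintype X] (p q : PMF X) : ℝ :=
  ∑ x, |(p x).toReal - (q x).toReal|

/-- KL divergence `D_KL(p‖q) = Σ_{x : p x > 0} p x * log (p x / q x)` on a finite type. -/
noncomputable def pmfKL {X : Type*} [Fintype X] (p q : PMF X) : ℝ :=
  ∑ x, if p x = 0 then 0 else (p x).toReal * Real.log ((p x).toReal / (q x).toReal)

/-- Mixed behavior policy: teacher's action when the intervention indicator is on,
student's action otherwise. -/
noncomputable def mixPolicy {S A : Type*} (πt πs : S → PMF A) (T : S → Bool) (s : S) : PMF A :=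
  if T s then πt s else πs s

/-- Finite-horizon value of a deterministic policy, defined recursively:
`V_0(s) = r s (σ s)` and `V_{k+1}(s) = r s (σ s) + γ E_{s' ~ P s (σ s)}[V_k s']`. -/
noncomputable def Vfin (P : S → A → PMF S) (r : S → A → ℝ) (γ : ℝ) (σ : S → A) : ℕ → S → ℝ
  | 0, s => r s (σ s)
  | k + 1, s => r s (σ s) + γ * pmfExp (P s (σ s)) (Vfin P r γ σ k)

/-- Finite-horizon value of the switching (mixed) policy that at each step picks whichever of
the two deterministic policies gives the larger continuation value. -/
noncomputable def Wswitch (P : S → A → PMF S) (r : S → A → ℝ) (γ : ℝ)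
    (πt πs : S → A) : ℕ → S → ℝ
  | 0, s => max (r s (πt s)) (r s (πs s))
  | k + 1, s =>
      max (r s (πt s) + γ * pmfExp (P s (πt s)) (Wswitch P r γ πt πs k))
          (r s (πs s) + γ * pmfExp (P s (πs s)) (Wswitch P r γ πt πs k))

end MDPDefs

/-!
Put `u_t = γ^t E_{x ~ d_t^{π',μ}}[V^π(x)]`. Since `Q^π(x,a) = r(x,a) + γ E_{P x a}[V^π]` and
one step of `π'` carries `d_t^{π',μ}` to `d_{t+1}^{π',μ}`, the `t`-th term of the right-hand side
is `γ^t E_{x ~ d_t^{π',μ}} E_{a ~ π'(x)}[r(x,a)] + (u_{t+1} - u_t)`. The reward terms sum to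
`J(π')`, and the differences telescope to `-u_0 = -J(π)` because `u` is summable (bounded terms
damped by `γ^t`).
-/

section pmfExp

variable {X Y : Type*} [Fintype X] [Fintype Y]

theorem PMF.sum_toReal_eq_one (p : PMF X) : ∑ x, (p x).toReal = 1 := by
  rw [← ENNReal.toReal_sum fun x _ => p.apply_ne_top x, ← ENNReal.toReal_one, ← p.tsum_coe,
    tsum_fintype]

theorem pmfExp_const (p : PMF X) (c : ℝ) : pmfExp p (fun _ => c) = c := by
  rw [pmfExp, ← Finset.sum_mul, p.sum_toReal_eq_one, one_mul]

theorem pmfExp_add (p : PMF X) (f g : X → ℝ) :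
    pmfExp p (fun x => f x + g x) = pmfExp p f + pmfExp p g := by
  simp only [pmfExp, mul_add, Finset.sum_add_distrib]

theorem pmfExp_sub (p : PMF X) (f g : X → ℝ) :
    pmfExp p (fun x => f x - g x) = pmfExp p f - pmfExp p g := by
  simp only [pmfExp, mul_sub, Finset.sum_sub_distrib]

theorem pmfExp_const_mul (p : PMF X) (c : ℝ) (f : X → ℝ) :
    pmfExp p (fun x => c * f x) = c * pmfExp p f := by
  simp only [pmfExp, Finset.mul_sum, mul_left_comm]

theorem abs_pmfExp_le (p : PMF X) {f : X → ℝ} {C : ℝ} (h : ∀ x, |f x| ≤ C) :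
    |pmfExp p f| ≤ C :=
  calc |pmfExp p f| ≤ ∑ x, (p x).toReal * |f x| := by
        simpa only [pmfExp, abs_mul, ENNReal.abs_toReal] using
          Finset.abs_sum_le_sum_abs (fun x => (p x).toReal * f x) Finset.univ
    _ ≤ ∑ x, (p x).toReal * C := by gcongr with x; exact h x
    _ = C := by rw [← Finset.sum_mul, p.sum_toReal_eq_one, one_mul]

theorem pmfExp_bind (p : PMF X) (q : X → PMF Y) (f : Y → ℝ) :
    pmfExp (p.bind q) f = pmfExp p (fun x => pmfExp (q x) f) := by
  have h_bind (y : Y) : ((p.bind q) y).toReal = ∑ x, (p x).toReal * (q x y).toReal := by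
    rw [PMF.bind_apply, tsum_fintype,
      ENNReal.toReal_sum fun x _ => ENNReal.mul_ne_top (p.apply_ne_top x) ((q x).apply_ne_top y)]
    simp only [ENNReal.toReal_mul]
  simp only [pmfExp, h_bind, Finset.sum_mul, Finset.mul_sum, mul_assoc]
  exact Finset.sum_comm

theorem pmfExp_tsum (p : PMF X) {g : X → ℕ → ℝ} (hg : ∀ x, Summable (g x)) :
    pmfExp p (fun x => ∑' t, g x t) = ∑' t, pmfExp p (fun x => g x t) := by
  simp only [pmfExp, ← tsum_mul_left]
  exact (Summable.tsum_finsetSum fun x _ => (hg x).mul_left _).symm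

theorem summable_pow_mul_pmfExp {γ : ℝ} (hγ0 : 0 ≤ γ) (hγ1 : γ < 1) (p : ℕ → PMF X)
    (f : X → ℝ) : Summable fun t => γ ^ t * pmfExp (p t) f := by
  obtain ⟨C, hC⟩ := Finite.exists_le fun x => |f x|
  refine .of_norm_bounded ((summable_geometric_of_lt_one hγ0 hγ1).mul_right C) fun t => ?_
  rw [Real.norm_eq_abs, abs_mul, abs_of_nonneg (pow_nonneg hγ0 t)]
  exact mul_le_mul_of_nonneg_left (abs_pmfExp_le _ hC) (pow_nonneg hγ0 t)

end pmfExp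

theorem tsum_succ_sub_eq_neg {G : Type*} [AddCommGroup G] [TopologicalSpace G]
    [IsTopologicalAddGroup G] [T2Space G] {u : ℕ → G} (hu : Summable u) :
    ∑' t, (u (t + 1) - u t) = -u 0 := by
  rw [((summable_nat_add_iff 1).2 hu).tsum_sub hu, hu.tsum_eq_zero_add]
  abel

section MDP

variable {S A : Type*} (P : S → A → PMF S)

theorem stateDist_bind (π : S → PMF A) (μ : PMF S) (q : S → PMF S) (t : ℕ) :
    stateDist P π (μ.bind q) t = μ.bind fun s => stateDist P π (q s) t := by
  induction t with
  | zero => rfl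
  | succ t ih => simp only [stateDist, ih, PMF.bind_bind]

theorem stateDist_eq_bind_pure (π : S → PMF A) (μ : PMF S) (t : ℕ) :
    stateDist P π μ t = μ.bind fun s => stateDist P π (PMF.pure s) t := by
  conv_lhs => rw [← μ.bind_pure]
  exact stateDist_bind P π μ PMF.pure t

variable [Fintype S] [Fintype A]

theorem pmfExp_stateDist_succ (π : S → PMF A) (μ : PMF S) (t : ℕ) (f : S → ℝ) :
    pmfExp (stateDist P π μ (t + 1)) f =
      pmfExp (stateDist P π μ t) fun x => pmfExp (π x) fun a => pmfExp (P x a) f := by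
  simp only [stateDist, pmfExp_bind]

theorem Jret_eq_tsum (r : S → A → ℝ) {γ : ℝ} (hγ0 : 0 ≤ γ) (hγ1 : γ < 1) (π : S → PMF A)
    (μ : PMF S) :
    Jret P r γ π μ =
      ∑' t, γ ^ t * pmfExp (stateDist P π μ t) fun x => pmfExp (π x) fun a => r x a := by
  unfold Jret Vval
  rw [pmfExp_tsum μ fun s => summable_pow_mul_pmfExp hγ0 hγ1 _ _]
  refine tsum_congr fun t => ?_
  rw [pmfExp_const_mul, stateDist_eq_bind_pure P π μ t, pmfExp_bind]

theorem pmfExp_Adv (r : S → A → ℝ) (γ : ℝ) (π π' : S → PMF A) (x : S) :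
    pmfExp (π' x) (fun a => Adv P r γ π x a) =
      pmfExp (π' x) (fun a => r x a)
        + γ * pmfExp (π' x) (fun a => pmfExp (P x a) (Vval P r γ π)) - Vval P r γ π x := by
  simp only [Adv, Qval, pmfExp_sub, pmfExp_add, pmfExp_const_mul, pmfExp_const]

theorem pow_mul_pmfExp_stateDist_Adv (r : S → A → ℝ) (γ : ℝ) (π π' : S → PMF A) (μ : PMF S)
    (t : ℕ) :
    γ ^ t * pmfExp (stateDist P π' μ t) (fun x => pmfExp (π' x) fun a => Adv P r γ π x a) =
      γ ^ t * pmfExp (stateDist P π' μ t) (fun x => pmfExp (π' x) fun a => r x a)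
        + (γ ^ (t + 1) * pmfExp (stateDist P π' μ (t + 1)) (Vval P r γ π)
          - γ ^ t * pmfExp (stateDist P π' μ t) (Vval P r γ π)) := by
  simp only [pmfExp_Adv, pmfExp_sub, pmfExp_add, pmfExp_const_mul, pmfExp_stateDist_succ]
  ring

end MDP

theorem perf_diff_trajectory_general {S A : Type*} [Fintype S] [Fintype A]
    (P : S → A → PMF S) (r : S → A → ℝ) (γ : ℝ) (hγ0 : 0 ≤ γ) (hγ1 : γ < 1)
    (π π' : S → PMF A) (μ : PMF S) :
    Jret P r γ π' μ - Jret P r γ π μ =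
      ∑' t : ℕ, γ ^ t *
        pmfExp (stateDist P π' μ t) (fun x => pmfExp (π' x) fun a => Adv P r γ π x a) := by
  set u : ℕ → ℝ := fun t => γ ^ t * pmfExp (stateDist P π' μ t) (Vval P r γ π)
  have hu : Summable u := summable_pow_mul_pmfExp hγ0 hγ1 _ _
  have hJ : Jret P r γ π μ = u 0 := by simp only [u, Jret, stateDist, pow_zero, one_mul]
  have hdiff : Summable fun t => u (t + 1) - u t := ((summable_nat_add_iff 1).2 hu).sub hu
  rw [tsum_congr (pow_mul_pmfExp_stateDist_Adv P r γ π π' μ),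
    (summable_pow_mul_pmfExp hγ0 hγ1 _ _).tsum_add hdiff, tsum_succ_sub_eq_neg hu,
    ← Jret_eq_tsum P r hγ0 hγ1, hJ, sub_eq_add_neg]

/-- Performance difference, trajectory form: for any two policies `π` and `π'`,
`J(π') − J(π) = Σ_{t=0}^∞ γ^t E_{x ~ d_t^{π',μ}} E_{a ~ π'(x)} [A^π(x,a)]`. -/
theorem perf_diff_trajectory {S A : Type*} [Fintype S] [Nonempty S] [Fintype A] [Nonempty A]
    (P : S → A → PMF S) (r : S → A → ℝ) (γ : ℝ) (hγ0 : 0 ≤ γ) (hγ1 : γ < 1)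
    (π π' : S → PMF A) (μ : PMF S) :
    Jret P r γ π' μ - Jret P r γ π μ =
      ∑' t : ℕ, γ ^ t *
        pmfExp (stateDist P π' μ t) (fun x => pmfExp (π' x) fun a => Adv P r γ π x a) :=
  perf_diff_trajectory_general P r γ hγ0 hγ1 π π' μ
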